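/- arXiv:2107.13058 — 2 statements merged into one kernel-verified Lean document; each statement's English description precedes it below -/
import Mathlib

section
/- Let S be a finite index set of routes, each route r ∈ S having cost c_r ∈ ℝ. Consider a set-partitioning-type integer program P: minimize ∑_{r∈S} c_r θ_r over θ ∈ {0,1}^S subject to linear constraints Aθ ≤ b and coverage constraints ∑_r α_{i,r} θ_r = 1 for i in a finite set I (with α_{i,r} ∈ {0,1}). Let RP be its LP relaxation with the coverage equalities relaxed to ∑_r α_{i,r} θ_r ≥ 1 and θ_r ≥ 0, and let (μ, ν) with ν ≥ 0, μ ≤ 0 be an optimal dual solution of RP with dual objective value φ(RP). Suppose ub is the cost of some feasible integer solution of P. If a route r has reduced cost c_r − ∑_i α_{i,r} ν_i − (A^T μ)_r > ub − φ(RP), then θ_r = 0 in every optimal integer solution of P whose cost is at most ub. -/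
open Finset

/-- Lemma 3 (generalized): in a set-partitioning integer program, a route whose
LP reduced cost (w.r.t. a dual-feasible solution of the relaxation) exceeds the
gap ub − φ(RP) cannot be used by any optimal integer solution of cost ≤ ub. -/
theorem stmt_4 {S I J : Type*} [Fintype S] [Fintype I] [Fintype J]
    (c : S → ℝ) (α : I → S → ℝ) (hα : ∀ i r, α i r = 0 ∨ α i r = 1)
    (A : J → S → ℝ) (b : J → ℝ)
    (μ : J → ℝ) (ν : I → ℝ) (hν : ∀ i, 0 ≤ ν i) (hμ : ∀ j, μ j ≤ 0)
    (hdualfeas : ∀ r : S, ∑ i, α i r * ν i + ∑ j, A j r * μ j ≤ c r)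
    (ub : ℝ)
    (hub : ∃ θ₀ : S → ℝ, (∀ r, θ₀ r = 0 ∨ θ₀ r = 1) ∧
      (∀ j, ∑ r, A j r * θ₀ r ≤ b j) ∧ (∀ i, ∑ r, α i r * θ₀ r = 1) ∧
      ∑ r, c r * θ₀ r = ub)
    (r : S)
    (hrc : c r - ∑ i, α i r * ν i - ∑ j, A j r * μ j >
      ub - (∑ j, μ j * b j + ∑ i, ν i)) :
    ∀ θ : S → ℝ, (∀ r', θ r' = 0 ∨ θ r' = 1) →
      (∀ j, ∑ r', A j r' * θ r' ≤ b j) → (∀ i, ∑ r', α i r' * θ r' = 1) →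
      ∑ r', c r' * θ r' ≤ ub → θ r = 0 := by
  intro θ hθ hAθ hcov hcost
  by_contra hne
  have hθr : θ r = 1 := (hθ r).resolve_left hne
  have hθnn : ∀ r', 0 ≤ θ r' := fun r' => by rcases hθ r' with h | h <;> simp [h]
  -- each slack term is nonnegative
  have hnn : ∀ r' ∈ Finset.univ,
      0 ≤ (c r' - (∑ i, α i r' * ν i + ∑ j, A j r' * μ j)) * θ r' := by
    intro r' _
    exact mul_nonneg (by linarith [hdualfeas r']) (hθnn r')
  have h1 : (c r - (∑ i, α i r * ν i + ∑ j, A j r * μ j)) * θ r ≤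
      ∑ r', (c r' - (∑ i, α i r' * ν i + ∑ j, A j r' * μ j)) * θ r' :=
    Finset.single_le_sum hnn (Finset.mem_univ r)
  have h2 : ∑ r', (∑ i, α i r' * ν i) * θ r' = ∑ i, ν i := by
    have : ∑ r', (∑ i, α i r' * ν i) * θ r' = ∑ i, ν i * ∑ r', α i r' * θ r' := by
      simp_rw [Finset.sum_mul, Finset.mul_sum]
      rw [Finset.sum_comm]
      congr 1; ext i; congr 1; ext r'; ring
    rw [this]; simp [hcov]
  have h3 : ∑ j, μ j * b j ≤ ∑ r', (∑ j, A j r' * μ j) * θ r' := by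
    have heq : ∑ r', (∑ j, A j r' * μ j) * θ r' = ∑ j, μ j * ∑ r', A j r' * θ r' := by
      simp_rw [Finset.sum_mul, Finset.mul_sum]
      rw [Finset.sum_comm]
      congr 1; ext j; congr 1; ext r'; ring
    rw [heq]
    exact Finset.sum_le_sum fun j _ => mul_le_mul_of_nonpos_left (hAθ j) (hμ j)
  have hsplit : ∑ r', (c r' - (∑ i, α i r' * ν i + ∑ j, A j r' * μ j)) * θ r' =
      ∑ r', c r' * θ r' - ∑ r', (∑ i, α i r' * ν i) * θ r'
        - ∑ r', (∑ j, A j r' * μ j) * θ r' := by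
    rw [← Finset.sum_sub_distrib, ← Finset.sum_sub_distrib]
    congr 1; ext r'; ring
  rw [hθr, mul_one] at h1
  rw [hsplit, h2] at h1
  linarith
end

section
/- Label dominance soundness: define a label at node i as a tuple L = (c, e, d, V) with c ∈ ℝ (reduced cost), e ∈ ℝ (earliest arrival time), d ∈ ℕ (accumulated demand), V a subset of a finite node set (extendable nodes). Define extension of L along arc (i,j) with travel-plus-service time t ≥ 0, arc cost c_{ij} ∈ ℝ, and demand q_j ≥ 0 by: e' = e + t, c' = c + e' + c_{ij}, d' = d + q_j, V' ⊆ V \ {j} determined by resource-feasibility conditions that are monotone (larger e or d gives a smaller feasible V'). Suppose L¹ = (c¹, e¹, d¹, V¹) and L² = (c², e², d², V²) are labels at the same node with c¹ ≤ c², e¹ ≤ e², d¹ ≤ d², and V¹ ⊇ V². Then for every feasible completion of L² to a full route (a sequence of extensions ending at the depot), the same completion applied to L¹ is feasible and yields total cost no greater than that of L²'s completion. -/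
/-- A label of the label-setting algorithm: reduced cost, earliest arrival
time, accumulated demand, and set of extendable nodes. -/
structure DPLabel (ι : Type*) where
  c : ℝ
  e : ℝ
  d : ℕ
  V : Set ι

/-- Extension of a label along an arc to node `j`: arrival time `e + t j`,
cost increment `e' + cc j` (cumulative-arrival objective plus dual arc cost),
demand increment `q j`, and extendable set shrunk by resource feasibility. -/
def DPLabel.extend {ι : Type*} (t cc : ι → ℝ) (q : ι → ℕ)
    (Vfeas : ℝ → ℕ → Set ι) (L : DPLabel ι) (j : ι) : DPLabel ι :=
  ⟨L.c + (L.e + t j) + cc j, L.e + t j, L.d + q j,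
    (L.V \ {j}) ∩ Vfeas (L.e + t j) (L.d + q j)⟩

/-- Extending a label along a whole sequence of nodes. -/
def DPLabel.extendList {ι : Type*} (t cc : ι → ℝ) (q : ι → ℕ)
    (Vfeas : ℝ → ℕ → Set ι) (L : DPLabel ι) : List ι → DPLabel ι
  | [] => L
  | j :: js => (L.extend t cc q Vfeas j).extendList t cc q Vfeas js

/-- Feasibility of a completion: each node visited must be extendable. -/
def DPLabel.feasibleList {ι : Type*} (t cc : ι → ℝ) (q : ι → ℕ)
    (Vfeas : ℝ → ℕ → Set ι) (L : DPLabel ι) : List ι → Prop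
  | [] => True
  | j :: js => j ∈ L.V ∧ (L.extend t cc q Vfeas j).feasibleList t cc q Vfeas js

/-!
Dominance is preserved by every single extension: the arrival time `e + t j` and the demand
`d + q j` are monotone, the cost `c + (e + t j) + cc j` is monotone in `(c, e)`, and the new
extendable set `(V \ {j}) ∩ Vfeas e' d'` grows with `V` and shrinks with `(e', d')`. Induction
along the completion then carries both dominance and feasibility to the end of the route.
-/

namespace DPLabel

variable {ι : Type*}

structure Dominates (L₁ L₂ : DPLabel ι) : Prop where
  cost_le : L₁.c ≤ L₂.c
  arrival_le : L₁.e ≤ L₂.e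
  demand_le : L₁.d ≤ L₂.d
  extendable_subset : L₂.V ⊆ L₁.V

section

variable {t cc : ι → ℝ} {q : ι → ℕ} {Vfeas : ℝ → ℕ → Set ι}
  (hVfeas : ∀ (e₁ e₂ : ℝ) (d₁ d₂ : ℕ), e₁ ≤ e₂ → d₁ ≤ d₂ → Vfeas e₂ d₂ ⊆ Vfeas e₁ d₁)
include hVfeas

theorem Dominates.extend {L₁ L₂ : DPLabel ι} (h : L₁.Dominates L₂) (j : ι) :
    (L₁.extend t cc q Vfeas j).Dominates (L₂.extend t cc q Vfeas j) where
  cost_le := by simp only [DPLabel.extend]; linarith [h.cost_le, h.arrival_le]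
  arrival_le := add_le_add_left h.arrival_le _
  demand_le := add_le_add_left h.demand_le _
  extendable_subset :=
    Set.inter_subset_inter (Set.sdiff_subset_sdiff_left h.extendable_subset)
      (hVfeas _ _ _ _ (add_le_add_left h.arrival_le _) (add_le_add_left h.demand_le _))

theorem Dominates.extendList {L₁ L₂ : DPLabel ι} (h : L₁.Dominates L₂) (js : List ι) :
    (L₁.extendList t cc q Vfeas js).Dominates (L₂.extendList t cc q Vfeas js) := by
  induction js generalizing L₁ L₂ with
  | nil => exact h
  | cons j js ih => exact ih (h.extend hVfeas j)

theorem Dominates.feasibleList {L₁ L₂ : DPLabel ι} (h : L₁.Dominates L₂) {js : List ι}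
    (hfeas : L₂.feasibleList t cc q Vfeas js) : L₁.feasibleList t cc q Vfeas js := by
  induction js generalizing L₁ L₂ with
  | nil => trivial
  | cons j js ih =>
    obtain ⟨hj, hrest⟩ := hfeas
    exact ⟨h.extendable_subset hj, ih (h.extend hVfeas j) hrest⟩

end

end DPLabel

theorem stmt_9_general {ι : Type*} (t cc : ι → ℝ) (q : ι → ℕ)
    (Vfeas : ℝ → ℕ → Set ι)
    (hVfeas : ∀ (e₁ e₂ : ℝ) (d₁ d₂ : ℕ), e₁ ≤ e₂ → d₁ ≤ d₂ →
      Vfeas e₂ d₂ ⊆ Vfeas e₁ d₁)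
    (L₁ L₂ : DPLabel ι)
    (hc : L₁.c ≤ L₂.c) (he : L₁.e ≤ L₂.e) (hd : L₁.d ≤ L₂.d)
    (hV : L₂.V ⊆ L₁.V)
    (js : List ι) (hfeas : L₂.feasibleList t cc q Vfeas js) :
    L₁.feasibleList t cc q Vfeas js ∧
      (L₁.extendList t cc q Vfeas js).c ≤ (L₂.extendList t cc q Vfeas js).c := by
  have hdom : L₁.Dominates L₂ := ⟨hc, he, hd, hV⟩
  exact ⟨hdom.feasibleList hVfeas hfeas, (hdom.extendList hVfeas js).cost_le⟩

/-- Soundness of the dominance rules of the label-setting algorithm: if L¹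
dominates L² (smaller cost, earlier arrival, smaller demand, larger extendable
set), then every feasible completion of L² is feasible for L¹ and yields a
total cost no greater than that of L². -/
theorem stmt_9 {ι : Type*} (t cc : ι → ℝ) (q : ι → ℕ)
    (ht : ∀ j, 0 ≤ t j)
    (Vfeas : ℝ → ℕ → Set ι)
    (hVfeas : ∀ (e₁ e₂ : ℝ) (d₁ d₂ : ℕ), e₁ ≤ e₂ → d₁ ≤ d₂ →
      Vfeas e₂ d₂ ⊆ Vfeas e₁ d₁)
    (L₁ L₂ : DPLabel ι)
    (hc : L₁.c ≤ L₂.c) (he : L₁.e ≤ L₂.e) (hd : L₁.d ≤ L₂.d)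
    (hV : L₂.V ⊆ L₁.V)
    (js : List ι) (hfeas : L₂.feasibleList t cc q Vfeas js) :
    L₁.feasibleList t cc q Vfeas js ∧
      (L₁.extendList t cc q Vfeas js).c ≤ (L₂.extendList t cc q Vfeas js).c :=
  stmt_9_general t cc q Vfeas hVfeas L₁ L₂ hc he hd hV js hfeas
end
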